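/- Let (X,d) be a metric space equipped with a stratified measure μ = μ_1 + ⋯ + μ_k: each μ_j is a Borel measure supported on a closed set Y_j ⊆ X, each μ_j is Q_j-Ahlfors regular on Y_j (there are constants 0 < c_j ≤ C_j with c_j r^{Q_j} ≤ μ_j(B_r(y)) ≤ C_j r^{Q_j} for all y ∈ Y_j and all radii r > 0 of balls of (Y_j, d)), and Q_1 < Q_2 < ⋯ < Q_k. Let u ∈ L¹_loc(X,μ) and let x ∈ ⋂_{i=1}^{l} Y_{j_i}, where {j_i} is an increasing subsequence of {1,…,k}, with x ∉ Y_j for j ∉ {j_1,…,j_l}. If the AMV Laplacian Δ_{μ_{j_1}} u(x) exists and r^{Q_{j_i} − Q_{j_1}} |Δ_{μ_{j_i}, r} u(x)| → 0 as r → 0⁺ for all 2 ≤ i ≤ l, then Δ_μ u(x) exists and Δ_μ u(x) = Δ_{μ_{j_1}} u(x). -/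

import Mathlib

/-!
Near `x` only the strata through `x` carry mass, so on small balls `μ = ∑ i, μ_{j_i}` and the
average over `B_r(x)` with respect to `μ` is the convex combination of the averages with respect to
the `μ_{j_i}`, with weights `μ_{j_i}(B_r(x)) / μ(B_r(x))`. Ahlfors regularity bounds the weight
of the `i`-th stratum by `(C_{j_i} / c_{j_1}) r^{Q_{j_i} - Q_{j_1}}`, which tends to `0` for
`i ≥ 2` and, by hypothesis, still does so after multiplication by `|Δ_{μ_{j_i}, r} u(x)|`. Hence the
weight of the lowest-dimensional stratum tends to `1` and its Laplacian survives in the limit.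
-/

open MeasureTheory Metric Filter Topology Real
open scoped ENNReal

namespace MeasureTheory

variable {α ι κ : Type*} [MeasurableSpace α]

theorem Measure.restrict_finsetSum (t : Finset ι) (μ : ι → Measure α) (s : Set α) :
    (∑ i ∈ t, μ i).restrict s = ∑ i ∈ t, (μ i).restrict s := by
  simpa only [Measure.restrictₗ_apply] using _root_.map_sum (Measure.restrictₗ s) μ t

theorem integrableOn_finsetSum_measure {E : Type*} [NormedAddCommGroup E] {t : Finset ι}
    {μ : ι → Measure α} {s : Set α} {f : α → E} :
    IntegrableOn f s (∑ i ∈ t, μ i) ↔ ∀ i ∈ t, IntegrableOn f s (μ i) := by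
  simp only [IntegrableOn, Measure.restrict_finsetSum, integrable_finsetSum_measure]

theorem Measure.restrict_sum_eq_sum_comp_of_injective [Fintype ι] [Fintype κ] {e : ι → κ}
    (he : Function.Injective e) {μ : κ → Measure α} {s : Set α}
    (hs : ∀ m ∉ Set.range e, μ m s = 0) :
    (∑ m, μ m).restrict s = (∑ i, μ (e i)).restrict s := by
  simp only [Measure.restrict_finsetSum]
  exact (Fintype.sum_of_injective e he _ _
    (fun m hm => Measure.restrict_eq_zero.2 (hs m hm)) fun _ => rfl).symm

theorem measureReal_finsetSum_apply {t : Finset ι} {μ : ι → Measure α} {s : Set α}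
    (hμ : ∀ i ∈ t, μ i s ≠ ∞) : (∑ i ∈ t, μ i).real s = ∑ i ∈ t, (μ i).real s := by
  rw [measureReal_def, Measure.finsetSum_apply, ENNReal.toReal_sum hμ]
  rfl

theorem measureReal_div_measureReal_finsetSum_le {t : Finset ι} {μ : ι → Measure α}
    {s : Set α} (hμ : ∀ i ∈ t, μ i s ≠ ∞) {i j : ι} (hj : j ∈ t) {a b : ℝ} (ha : 0 ≤ a)
    (hb : 0 < b) (hia : μ i s ≤ ENNReal.ofReal a) (hjb : ENNReal.ofReal b ≤ μ j s) :
    (μ i).real s / (∑ m ∈ t, μ m).real s ≤ a / b := by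
  have hbj : b ≤ (μ j).real s := (ENNReal.ofReal_le_iff_le_toReal (hμ j hj)).1 hjb
  have hjt : (μ j).real s ≤ (∑ m ∈ t, μ m).real s := by
    rw [measureReal_finsetSum_apply hμ]
    exact Finset.single_le_sum (fun m _ => measureReal_nonneg) hj
  exact div_le_div₀ ha (ENNReal.toReal_le_of_le_ofReal ha hia) hb (hbj.trans hjt)

theorem setAverage_finsetSum_measure {E : Type*} [NormedAddCommGroup E] [NormedSpace ℝ E]
    {t : Finset ι} {μ : ι → Measure α} {s : Set α} {f : α → E} (hμ : ∀ i ∈ t, μ i s ≠ ∞)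
    (hf : ∀ i ∈ t, IntegrableOn f s (μ i)) :
    ⨍ x in s, f x ∂(∑ i ∈ t, μ i) =
      ∑ i ∈ t, ((μ i).real s / (∑ j ∈ t, μ j).real s) • ⨍ x in s, f x ∂(μ i) := by
  simp only [div_eq_inv_mul, mul_smul]
  rw [← Finset.smul_sum, Finset.sum_congr rfl fun i hi => measure_smul_setAverage f (hμ i hi),
    setAverage_eq, Measure.restrict_finsetSum, integral_finsetSum_measure hf]

theorem eventually_measure_ball_eq_zero {X : Type*} [PseudoMetricSpace X] [MeasurableSpace X]
    {μ : Measure X} {Y : Set X} {x : X} (hY : IsClosed Y) (hμ : μ Yᶜ = 0) (hx : x ∉ Y) :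
    ∀ᶠ r in 𝓝 (0 : ℝ), μ (ball x r) = 0 :=
  (eventually_ball_subset (hY.isOpen_compl.mem_nhds hx)).mono fun _ hr => measure_mono_null hr hμ

end MeasureTheory

theorem tendsto_sum_mul_of_sum_eq_one {α ι : Type*} [Fintype ι] {l : Filter α}
    {w G : ι → α → ℝ} {L : ℝ} (i₀ : ι) (hsum : ∀ᶠ a in l, ∑ i, w i a = 1)
    (hw : ∀ i ≠ i₀, Tendsto (w i) l (𝓝 0))
    (hwG : ∀ i ≠ i₀, Tendsto (fun a => w i a * G i a) l (𝓝 0))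
    (hG : Tendsto (G i₀) l (𝓝 L)) :
    Tendsto (fun a => ∑ i, w i a * G i a) l (𝓝 L) := by
  classical
  have hsplit (f : ι → ℝ) : ∑ i, f i = f i₀ + ∑ i ∈ Finset.univ.erase i₀, f i :=
    (Finset.add_sum_erase _ f (Finset.mem_univ i₀)).symm
  have hrest (f : ι → α → ℝ) (hf : ∀ i ≠ i₀, Tendsto (f i) l (𝓝 0)) :
      Tendsto (fun a => ∑ i ∈ Finset.univ.erase i₀, f i a) l (𝓝 0) := by
    simpa only [Finset.sum_const_zero] using
      tendsto_finsetSum _ fun i hi => hf i (Finset.ne_of_mem_erase hi)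
  have hw₀ : Tendsto (w i₀) l (𝓝 1) := by
    have h := (tendsto_const_nhds (x := (1 : ℝ))).sub (hrest w hw)
    rw [sub_zero] at h
    refine h.congr' (hsum.mono fun a ha => ?_)
    rw [← ha, hsplit, add_sub_cancel_right]
  have h := (hw₀.mul hG).add (hrest _ hwG)
  rw [one_mul, add_zero] at h
  simpa only [hsplit] using h

/-- The `r`-scale AMV Laplacian `Δ_{μ,r} u(x)`. -/
noncomputable def amvLaplacianScale {X : Type*} [PseudoMetricSpace X] [MeasurableSpace X]
    (μ : Measure X) (u : X → ℝ) (x : X) (r : ℝ) : ℝ :=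
  1 / r ^ 2 * ⨍ y in ball x r, (u y - u x) ∂μ

theorem tendsto_amvLaplacianScale_sum {X ι : Type*} [PseudoMetricSpace X] [MeasurableSpace X]
    [Fintype ι] {ν : ι → Measure X} {u : X → ℝ} {x : X} {i₀ : ι} {Q C : ι → ℝ} {c L : ℝ}
    (hc : 0 < c) (hC : ∀ i, 0 ≤ C i) (hQ : ∀ i ≠ i₀, Q i₀ < Q i)
    (hlower : ∀ r, 0 < r → ENNReal.ofReal (c * r ^ Q i₀) ≤ ν i₀ (ball x r))
    (hupper : ∀ i r, 0 < r → ν i (ball x r) ≤ ENNReal.ofReal (C i * r ^ Q i))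
    (hu : ∀ᶠ r in 𝓝[>] 0, ∀ i, IntegrableOn u (ball x r) (ν i))
    (hL : Tendsto (amvLaplacianScale (ν i₀) u x) (𝓝[>] 0) (𝓝 L))
    (hrest : ∀ i ≠ i₀, Tendsto (fun r => r ^ (Q i - Q i₀) * |amvLaplacianScale (ν i) u x r|)
      (𝓝[>] 0) (𝓝 0)) :
    Tendsto (amvLaplacianScale (∑ i, ν i) u x) (𝓝[>] 0) (𝓝 L) := by
  set w : ι → ℝ → ℝ := fun i r => (ν i).real (ball x r) / (∑ j, ν j).real (ball x r)
  have hfin : ∀ r, 0 < r → ∀ i ∈ Finset.univ, ν i (ball x r) ≠ ∞ := fun r hr i _ =>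
    ne_top_of_le_ne_top ENNReal.ofReal_ne_top (hupper i r hr)
  have hcr : ∀ r, 0 < r → 0 < c * r ^ Q i₀ := fun r hr => mul_pos hc (rpow_pos_of_pos hr _)
  have hsum : ∀ᶠ r in 𝓝[>] 0, ∑ i, w i r = 1 := by
    filter_upwards [self_mem_nhdsWithin] with r (hr : 0 < r)
    have hi₀ : c * r ^ Q i₀ ≤ (ν i₀).real (ball x r) :=
      (ENNReal.ofReal_le_iff_le_toReal (hfin r hr i₀ (Finset.mem_univ _))).1 (hlower r hr)
    have htotal : (ν i₀).real (ball x r) ≤ ∑ i, (ν i).real (ball x r) :=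
      Finset.single_le_sum (fun i _ => measureReal_nonneg) (Finset.mem_univ i₀)
    simp only [w]
    rw [← Finset.sum_div, measureReal_finsetSum_apply (hfin r hr)]
    exact div_self ((hcr r hr).trans_le (hi₀.trans htotal)).ne'
  have hbound : ∀ i, ∀ᶠ r in 𝓝[>] 0, ‖w i r‖ ≤ C i / c * r ^ (Q i - Q i₀) := by
    intro i
    filter_upwards [self_mem_nhdsWithin] with r (hr : 0 < r)
    rw [norm_of_nonneg (div_nonneg measureReal_nonneg measureReal_nonneg), rpow_sub hr,
      div_mul_div_comm]
    exact measureReal_div_measureReal_finsetSum_le (hfin r hr) (Finset.mem_univ i₀)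
      (mul_nonneg (hC i) (rpow_nonneg hr.le _)) (hcr r hr) (hupper i r hr) (hlower r hr)
  refine (tendsto_sum_mul_of_sum_eq_one (G := fun i => amvLaplacianScale (ν i) u x) i₀ hsum
    (fun i hi => ?_) (fun i hi => ?_) hL).congr' ?_
  · have h : Tendsto (fun r : ℝ => r ^ (Q i - Q i₀)) (𝓝[>] 0) (𝓝 0) :=
      (tendsto_id.mono_left nhdsWithin_le_nhds).rpow_const_nhds_zero (sub_pos.2 (hQ i hi))
    exact squeeze_zero_norm' (hbound i) (by simpa using h.const_mul (C i / c))
  · refine squeeze_zero_norm' ?_ (by simpa using (hrest i hi).const_mul (C i / c))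
    filter_upwards [hbound i] with r hr
    rw [norm_mul, ← mul_assoc]
    exact mul_le_mul_of_nonneg_right hr (norm_nonneg _)
  · filter_upwards [self_mem_nhdsWithin, hu] with r (hr : 0 < r) hur
    have hur' : ∀ i ∈ Finset.univ, IntegrableOn (fun y => u y - u x) (ball x r) (ν i) :=
      fun i hi => (hur i).sub (integrableOn_const (hfin r hr i hi))
    simp only [amvLaplacianScale, setAverage_finsetSum_measure (hfin r hr) hur', smul_eq_mul,
      Finset.mul_sum, w]
    exact Finset.sum_congr rfl fun i _ => mul_left_comm _ _ _

theorem amv_laplacian_stratified_measure_general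
    {X : Type*} [MetricSpace X] [MeasurableSpace X]
    (k : ℕ) (μs : Fin k → Measure X) (Y : Fin k → Set X)
    (Q : Fin k → ℝ) (c C : Fin k → ℝ)
    (hYclosed : ∀ m, IsClosed (Y m))
    (hsupp : ∀ m, μs m (Y m)ᶜ = 0)
    (hc : ∀ m, 0 < c m) (hcC : ∀ m, c m ≤ C m)
    (hAhlfors : ∀ m, ∀ y ∈ Y m, ∀ r : ℝ, 0 < r →
      ENNReal.ofReal (c m * r ^ Q m) ≤ μs m (Metric.ball y r) ∧
      μs m (Metric.ball y r) ≤ ENNReal.ofReal (C m * r ^ Q m))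
    (hQmono : StrictMono Q)
    (u : X → ℝ) (hu : LocallyIntegrable u (∑ m, μs m))
    (l : ℕ) (hl : 0 < l) (js : Fin l → Fin k) (hjs : StrictMono js)
    (x : X) (hx : ∀ i, x ∈ Y (js i))
    (hxnot : ∀ m : Fin k, m ∉ Set.range js → x ∉ Y m)
    (L : ℝ)
    (hL : Filter.Tendsto
      (fun r : ℝ => (1 / r ^ 2) * ⨍ y in Metric.ball x r, (u y - u x) ∂(μs (js ⟨0, hl⟩)))
      (𝓝[>] (0 : ℝ)) (𝓝 L))
    (hrest : ∀ i : Fin l, i ≠ ⟨0, hl⟩ → Filter.Tendsto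
      (fun r : ℝ => r ^ (Q (js i) - Q (js ⟨0, hl⟩)) *
        |(1 / r ^ 2) * ⨍ y in Metric.ball x r, (u y - u x) ∂(μs (js i))|)
      (𝓝[>] (0 : ℝ)) (𝓝 0)) :
    Filter.Tendsto
      (fun r : ℝ => (1 / r ^ 2) * ⨍ y in Metric.ball x r, (u y - u x) ∂(∑ m, μs m))
      (𝓝[>] (0 : ℝ)) (𝓝 L) := by
  have hlocal : ∀ᶠ r in 𝓝 (0 : ℝ), ∀ m ∉ Set.range js, μs m (ball x r) = 0 :=
    eventually_all.2 fun m => eventually_imp_distrib_left.2 fun hm =>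
      eventually_measure_ball_eq_zero (hYclosed m) (hsupp m) (hxnot m hm)
  obtain ⟨s, hs, hus⟩ := hu x
  have hint : ∀ᶠ r in 𝓝 (0 : ℝ), ∀ i, IntegrableOn u (ball x r) (μs (js i)) :=
    (eventually_ball_subset hs).mono fun r hr i =>
      integrableOn_finsetSum_measure.1 (hus.mono_set hr) (js i) (Finset.mem_univ _)
  have hstrata := tendsto_amvLaplacianScale_sum (ν := fun i => μs (js i)) (hc _)
    (fun _ => (hc _).le.trans (hcC _))
    (fun _ hi => hQmono (hjs ((Ne.symm hi).lt_of_le (Nat.zero_le _))))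
    (fun r hr => (hAhlfors _ x (hx _) r hr).1) (fun i r hr => (hAhlfors _ x (hx i) r hr).2)
    (nhdsWithin_le_nhds hint) hL hrest
  refine hstrata.congr' (Eventually.filter_mono nhdsWithin_le_nhds (hlocal.mono fun r hr => ?_))
  simp only [amvLaplacianScale, Measure.restrict_sum_eq_sum_comp_of_injective hjs.injective hr]

/-- For a stratified measure `μ = μ₁ + ⋯ + μ_k` (each `μ_j` supported on a closed
set `Y_j` and `Q_j`-Ahlfors regular on it, `Q₁ < ⋯ < Q_k`), a point `x` in the intersection of
the strata `Y_{j₁}, …, Y_{j_l}` (and in no other stratum): if `Δ_{μ_{j₁}} u(x)` exists and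
`r^{Q_{j_i} - Q_{j₁}} |Δ_{μ_{j_i},r} u(x)| → 0` for `i ≥ 2`, then `Δ_μ u(x)` exists and equals
`Δ_{μ_{j₁}} u(x)`. -/
theorem amv_laplacian_stratified_measure
    {X : Type*} [MetricSpace X] [MeasurableSpace X] [BorelSpace X]
    (k : ℕ) (μs : Fin k → Measure X) (Y : Fin k → Set X)
    (Q : Fin k → ℝ) (c C : Fin k → ℝ)
    (hYclosed : ∀ m, IsClosed (Y m))
    (hsupp : ∀ m, μs m (Y m)ᶜ = 0)
    (hc : ∀ m, 0 < c m) (hcC : ∀ m, c m ≤ C m)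
    (hQnn : ∀ m, 0 ≤ Q m)
    (hAhlfors : ∀ m, ∀ y ∈ Y m, ∀ r : ℝ, 0 < r →
      ENNReal.ofReal (c m * r ^ Q m) ≤ μs m (Metric.ball y r) ∧
      μs m (Metric.ball y r) ≤ ENNReal.ofReal (C m * r ^ Q m))
    (hQmono : StrictMono Q)
    (u : X → ℝ) (hu : LocallyIntegrable u (∑ m, μs m))
    (l : ℕ) (hl : 0 < l) (js : Fin l → Fin k) (hjs : StrictMono js)
    (x : X) (hx : ∀ i, x ∈ Y (js i))
    (hxnot : ∀ m : Fin k, m ∉ Set.range js → x ∉ Y m)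
    (L : ℝ)
    (hL : Filter.Tendsto
      (fun r : ℝ => (1 / r ^ 2) * ⨍ y in Metric.ball x r, (u y - u x) ∂(μs (js ⟨0, hl⟩)))
      (𝓝[>] (0 : ℝ)) (𝓝 L))
    (hrest : ∀ i : Fin l, i ≠ ⟨0, hl⟩ → Filter.Tendsto
      (fun r : ℝ => r ^ (Q (js i) - Q (js ⟨0, hl⟩)) *
        |(1 / r ^ 2) * ⨍ y in Metric.ball x r, (u y - u x) ∂(μs (js i))|)
      (𝓝[>] (0 : ℝ)) (𝓝 0)) :
    Filter.Tendsto
      (fun r : ℝ => (1 / r ^ 2) * ⨍ y in Metric.ball x r, (u y - u x) ∂(∑ m, μs m))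
      (𝓝[>] (0 : ℝ)) (𝓝 L) :=
  amv_laplacian_stratified_measure_general k μs Y Q c C hYclosed hsupp hc hcC hAhlfors hQmono u hu l
    hl js hjs x hx hxnot L hL hrest
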